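/- The number of isomorphism classes of 2-dimensional algebras (not necessarily associative or unital) over the field F_2 is exactly 52. -/

import Mathlib

open Matrix Kronecker

variable {K : Type*} [Field K] {n : ℕ}

/-- The multiplication of the algebra `alg(M)` on `K^n`:
`e_i * e_j = ∑ k, (M i) j k • e_k`. -/
def algMul (M : Fin n → Matrix (Fin n) (Fin n) K) (x y : Fin n → K) : Fin n → K :=
  fun k => ∑ i, ∑ j, x i * y j * M i j k

/-- The right action `φ` of `GL n K` on tuples of matrices:
`φ(M, G)_l = G⁻¹ (∑ i, G_{il} M_i) G`. -/
def phi (M : Fin n → Matrix (Fin n) (Fin n) K) (G : GL (Fin n) K) :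
    Fin n → Matrix (Fin n) (Fin n) K :=
  fun l => (↑G⁻¹ : Matrix (Fin n) (Fin n) K) *
    (∑ i, (G : Matrix (Fin n) (Fin n) K) i l • M i) * (G : Matrix (Fin n) (Fin n) K)

/-- `algMul M` as a bilinear map. -/
def algMulL (M : Fin n → Matrix (Fin n) (Fin n) K) :
    (Fin n → K) →ₗ[K] (Fin n → K) →ₗ[K] (Fin n → K) :=
  LinearMap.mk₂ K (algMul M)
    (fun x x' y => by ext k; simp [algMul, add_mul, Finset.sum_add_distrib])
    (fun c x y => by
      ext k; simp only [algMul, Pi.smul_apply, smul_eq_mul, Finset.mul_sum]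
      exact Finset.sum_congr rfl fun i _ => Finset.sum_congr rfl fun j _ => by ring)
    (fun x y y' => by ext k; simp [algMul, mul_add, add_mul, Finset.sum_add_distrib])
    (fun c x y => by
      ext k; simp only [algMul, Pi.smul_apply, smul_eq_mul, Finset.mul_sum]
      exact Finset.sum_congr rfl fun i _ => Finset.sum_congr rfl fun j _ => by ring)

/-- Isomorphism of `n`-dimensional `K`-algebras, given as bilinear multiplications on `K^n`. -/
def isoRelL (B B' : (Fin n → K) →ₗ[K] (Fin n → K) →ₗ[K] (Fin n → K)) : Prop :=
  ∃ f : (Fin n → K) ≃ₗ[K] (Fin n → K), ∀ x y, f (B x y) = B' (f x) (f y)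

/-! Isomorphism classes of algebra structures on `K^n` are the orbits of `GL n K` acting on
bilinear multiplications by transport of structure, `(A • B)(x, y) = A B(A⁻¹x, A⁻¹y)`; the
multiplications fixed by `A` are those of which `A` is an automorphism. Over `F₂` there are
`2^8 = 256` multiplications and `GL 2 F₂ ≅ S₃` has order `6`. The identity fixes all of them,
each of the three involutions fixes `16` and each of the two elements of order three fixes `4`,
so Burnside's lemma counts `(256 + 3 * 16 + 2 * 4) / 6 = 52` orbits. -/

open MulAction ConjAct

section Action

variable {R : Type*} [CommRing R] {ι : Type*} [Fintype ι] [DecidableEq ι]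

/-- Transport of structure. The acting group is `ConjAct (GL ι R)` because `GL ι R` itself already
acts on bilinear maps, by postcomposition. -/
instance : SMul (ConjAct (GL ι R)) ((ι → R) →ₗ[R] (ι → R) →ₗ[R] ι → R) where
  smul g B := (B.compl₁₂ (mulVecLin ((ofConjAct g)⁻¹ : GL ι R))
    (mulVecLin ((ofConjAct g)⁻¹ : GL ι R))).compr₂ (mulVecLin (ofConjAct g : GL ι R))

theorem conjAct_smul_apply (g : ConjAct (GL ι R)) (B : (ι → R) →ₗ[R] (ι → R) →ₗ[R] ι → R)
    (x y : ι → R) :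
    (g • B) x y = (ofConjAct g : GL ι R) *ᵥ
      B (((ofConjAct g)⁻¹ : GL ι R) *ᵥ x) (((ofConjAct g)⁻¹ : GL ι R) *ᵥ y) :=
  rfl

instance : MulAction (ConjAct (GL ι R)) ((ι → R) →ₗ[R] (ι → R) →ₗ[R] ι → R) where
  one_smul B := LinearMap.ext₂ fun x y => by simp [conjAct_smul_apply]
  mul_smul g h B := LinearMap.ext₂ fun x y => by simp [conjAct_smul_apply, mulVec_mulVec]

theorem toConjAct_smul_eq_iff {A : GL ι R} {B B' : (ι → R) →ₗ[R] (ι → R) →ₗ[R] ι → R} :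
    toConjAct A • B = B' ↔ ∀ x y, (A : Matrix ι ι R) *ᵥ B x y = B' (A *ᵥ x) (A *ᵥ y) := by
  constructor
  · rintro rfl x y
    simp [conjAct_smul_apply, mulVec_mulVec]
  · intro h
    refine LinearMap.ext₂ fun x y => ?_
    simp [conjAct_smul_apply, h, mulVec_mulVec]

theorem toConjAct_smul_eq_self_iff {A : GL ι R} {B : (ι → R) →ₗ[R] (ι → R) →ₗ[R] ι → R} :
    toConjAct A • B = B ↔
      ∀ i j, (A : Matrix ι ι R) *ᵥ B (Pi.single i 1) (Pi.single j 1) =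
        B ((A : Matrix ι ι R).col i) ((A : Matrix ι ι R).col j) := by
  simp only [toConjAct_smul_eq_iff, ← mulVec_single_one]
  refine ⟨fun h i j => h _ _, fun h x y => ?_⟩
  have hext : B.compr₂ (mulVecLin A) = B.compl₁₂ (mulVecLin A) (mulVecLin A) :=
    LinearMap.ext_basis (Pi.basisFun R ι) (Pi.basisFun R ι) (by simpa using h)
  simpa using LinearMap.congr_fun₂ hext x y

end Action

theorem algMulL_apply (M : Fin n → Matrix (Fin n) (Fin n) K) (x y : Fin n → K) :
    algMulL M x y = algMul M x y :=
  rfl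

theorem algMul_single_single (M : Fin n → Matrix (Fin n) (Fin n) K) (i j : Fin n) :
    algMul M (Pi.single i 1) (Pi.single j 1) = M i j := by
  ext k
  simp [algMul, Pi.single_apply]

def algMulEquiv :
    (Fin n → Matrix (Fin n) (Fin n) K) ≃ ((Fin n → K) →ₗ[K] (Fin n → K) →ₗ[K] Fin n → K) where
  toFun := algMulL
  invFun B i j := B (Pi.single i 1) (Pi.single j 1)
  left_inv M := by
    ext i j k
    simp [algMulL_apply, algMul_single_single]
  right_inv B := LinearMap.ext_basis (Pi.basisFun K (Fin n)) (Pi.basisFun K (Fin n)) fun i j => by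
    rw [Pi.basisFun_apply, Pi.basisFun_apply]
    exact algMul_single_single _ i j

instance [Finite K] : Finite ((Fin n → K) →ₗ[K] (Fin n → K) →ₗ[K] Fin n → K) :=
  Finite.of_equiv _ algMulEquiv

theorem isoRelL_iff_mem_orbit {B B' : (Fin n → K) →ₗ[K] (Fin n → K) →ₗ[K] Fin n → K} :
    isoRelL B B' ↔ B' ∈ orbit (ConjAct (GL (Fin n) K)) B := by
  let e : GL (Fin n) K ≃* ((Fin n → K) ≃ₗ[K] (Fin n → K)) :=
    GeneralLinearGroup.toLin.trans (LinearMap.GeneralLinearGroup.generalLinearEquiv _ _)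
  rw [isoRelL, e.surjective.exists, mem_orbit_iff, toConjAct.surjective.exists]
  simp only [toConjAct_smul_eq_iff]
  rfl

theorem card_quot_isoRelL :
    Nat.card (Quot (isoRelL (K := K) (n := n))) =
      Nat.card (orbitRel.Quotient (ConjAct (GL (Fin n) K))
        ((Fin n → K) →ₗ[K] (Fin n → K) →ₗ[K] Fin n → K)) :=
  Nat.card_congr <| Quot.congrRight fun _ _ => isoRelL_iff_mem_orbit.trans mem_orbit_symm

theorem MulAction.card_orbitRel_quotient_mul_card_eq_sum {G X : Type*} [Group G] [MulAction G X]
    [Fintype G] [Finite X] :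
    Nat.card (orbitRel.Quotient G X) * Fintype.card G = ∑ g : G, Nat.card (fixedBy X g) := by
  have := Fintype.ofFinite X
  classical
  simp only [Nat.card_eq_fintype_card]
  exact (sum_card_fixedBy_eq_card_orbits_mul_card_group G X).symm

theorem card_fixedBy_toConjAct [Fintype K] [DecidableEq K] (A : GL (Fin n) K) :
    Nat.card (fixedBy ((Fin n → K) →ₗ[K] (Fin n → K) →ₗ[K] Fin n → K) (toConjAct A)) =
      Fintype.card {M : Fin n → Matrix (Fin n) (Fin n) K //
        ∀ i j, (A : Matrix (Fin n) (Fin n) K) *ᵥ M i j =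
          algMul M ((A : Matrix (Fin n) (Fin n) K).col i)
            ((A : Matrix (Fin n) (Fin n) K).col j)} := by
  rw [← Nat.card_eq_fintype_card]
  refine Nat.card_congr (algMulEquiv.subtypeEquiv fun M => ?_).symm
  change _ ↔ toConjAct A • algMulL M = algMulL M
  simp only [toConjAct_smul_eq_self_iff, algMulL_apply, algMul_single_single]

/-- There are exactly 52 isomorphism classes of 2-dimensional algebras over `F₂`. -/
theorem card_isoClasses_f2_dim2 :
    Nat.card (Quot (isoRelL (K := ZMod 2) (n := 2))) = 52 := by
  have burnside := card_orbitRel_quotient_mul_card_eq_sum (G := ConjAct (GL (Fin 2) (ZMod 2)))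
    (X := (Fin 2 → ZMod 2) →ₗ[ZMod 2] (Fin 2 → ZMod 2) →ₗ[ZMod 2] Fin 2 → ZMod 2)
  have card_GL : Fintype.card (ConjAct (GL (Fin 2) (ZMod 2))) = 6 := by
    rw [ConjAct.card, ← Nat.card_eq_fintype_card, card_GL_field]
    decide
  have sum_card_fixedBy : ∑ g : ConjAct (GL (Fin 2) (ZMod 2)),
      Nat.card (fixedBy ((Fin 2 → ZMod 2) →ₗ[ZMod 2] (Fin 2 → ZMod 2) →ₗ[ZMod 2] Fin 2 → ZMod 2) g)
        = 312 := by
    rw [← toConjAct.toEquiv.sum_comp]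
    simp only [MulEquiv.toEquiv_eq_coe, MulEquiv.coe_toEquiv, card_fixedBy_toConjAct]
    decide +kernel
  rw [card_GL, sum_card_fixedBy] at burnside
  rw [card_quot_isoRelL]
  omega
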